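/- arXiv:1803.00619 — 2 statements merged into one kernel-verified Lean document; each statement's English description precedes it below -/
import Mathlib

section
/- Let r ≥ 3 and let α ∈ S(n, r). Then the projective linear set O(α) is the union of the q^n + 1 affine sets A(α) and A(1/(α + ξ)) for ξ ranging over all elements of F_{q^n}, and these q^n + 1 affine sets are pairwise disjoint; in particular O(α) is partitioned into exactly q^n + 1 affine sets. -/
open Polynomial Matrix

/-- The affine set `A(α) = {a α + b : a, b ∈ K, a ≠ 0}`. -/
def affineSet (K : Type*) {L : Type*} [Field K] [Field L] [Algebra K L] (α : L) : Set L :=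
  {β | ∃ a b : K, a ≠ 0 ∧ β = algebraMap K L a * α + algebraMap K L b}

/-- The projective linear set
`O(α) = {(a α + b) / (c α + d) : a, b, c, d ∈ K, a d - b c ≠ 0}`. -/
def projSet (K : Type*) {L : Type*} [Field K] [Field L] [Algebra K L] (α : L) : Set L :=
  {β | ∃ a b c d : K, a * d - b * c ≠ 0 ∧
    β = (algebraMap K L a * α + algebraMap K L b) /
      (algebraMap K L c * α + algebraMap K L d)}

/-!
Since `α` has degree at least `3` over `K`, no nonzero polynomial of degree at most `2` over `K`
vanishes at `α`. A Möbius image `(a α + b) / (c α + d)` is affine in `α` when `c = 0`, and affine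
in `(α + d / c)⁻¹` otherwise. If two of the sets `A(α)`, `A((α + ξ)⁻¹)` met, clearing
denominators would give a relation of degree at most `2` for `α`, whose vanishing coefficients
force the two sets to coincide.
-/

section

variable {K L : Type*} [Field K] [Field L] [Algebra K L]

theorem mem_affineSet_self (γ : L) : γ ∈ affineSet K γ :=
  ⟨1, 0, one_ne_zero, by simp⟩

theorem affineSet_subset_projSet (α : L) : affineSet K α ⊆ projSet K α := by
  rintro _ ⟨a, b, ha, rfl⟩
  exact ⟨a, b, 0, 1, by simpa using ha, by simp⟩

theorem affineSet_inv_add_subset_projSet {α : L} {ξ : K} (hξ : α + algebraMap K L ξ ≠ 0) :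
    affineSet K (α + algebraMap K L ξ)⁻¹ ⊆ projSet K α := by
  rintro _ ⟨a, b, ha, rfl⟩
  refine ⟨b, a + b * ξ, 1, ξ, by simpa using ha, ?_⟩
  simp only [map_add, map_mul, map_one, one_mul]
  field_simp
  ring

theorem div_linear_eq_mul_inv_add (x a b c d : L) (hc : c ≠ 0) (hx : c * x + d ≠ 0) :
    (a * x + b) / (c * x + d) = (b * c - a * d) / (c * c) * (x + d / c)⁻¹ + a / c := by
  rw [show x + d / c = (c * x + d) / c by field_simp, inv_div, div_mul_div_comm,
    div_add_div _ _ (mul_ne_zero (mul_ne_zero hc hc) hx) hc, div_eq_div_iff hx (by positivity)]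
  ring

theorem eq_zero_of_aeval_eq_zero_of_natDegree_lt {α : L} {q : K[X]}
    (hq : q.natDegree < (minpoly K α).natDegree) (h : aeval α q = 0) : q = 0 := by
  by_contra hq0
  exact hq.not_ge (natDegree_le_natDegree (minpoly.degree_le_of_ne_zero K α hq0 h))

theorem eq_zero_of_linear_eq_zero {α : L} (hα : 1 < (minpoly K α).natDegree) {b c : K}
    (h : algebraMap K L b * α + algebraMap K L c = 0) : b = 0 ∧ c = 0 := by
  have hq : C b * X + C c = 0 :=
    eq_zero_of_aeval_eq_zero_of_natDegree_lt (natDegree_linear_le.trans_lt hα)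
      (by simpa [Algebra.smul_def] using h)
  exact ⟨by simpa using congrArg (coeff · 1) hq, by simpa using congrArg (coeff · 0) hq⟩

theorem eq_zero_of_quadratic_eq_zero {α : L} (hα : 2 < (minpoly K α).natDegree) {a b c : K}
    (h : algebraMap K L a * α ^ 2 + algebraMap K L b * α + algebraMap K L c = 0) :
    a = 0 ∧ b = 0 ∧ c = 0 := by
  have hq : C a * X ^ 2 + C b * X + C c = 0 :=
    eq_zero_of_aeval_eq_zero_of_natDegree_lt (natDegree_quadratic_le.trans_lt hα)
      (by simpa [Algebra.smul_def] using h)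
  exact ⟨by simpa using congrArg (coeff · 2) hq, by simpa using congrArg (coeff · 1) hq,
    by simpa using congrArg (coeff · 0) hq⟩

theorem add_algebraMap_ne_zero {α : L} (hα : 1 < (minpoly K α).natDegree) (ξ : K) :
    α + algebraMap K L ξ ≠ 0 := fun h =>
  one_ne_zero (eq_zero_of_linear_eq_zero hα (b := 1) (c := ξ) (by simpa using h)).1

theorem projSet_subset {α : L} (hα : 1 < (minpoly K α).natDegree) :
    projSet K α ⊆ affineSet K α ∪ ⋃ ξ : K, affineSet K (α + algebraMap K L ξ)⁻¹ := by
  rintro _ ⟨a, b, c, d, hdet, rfl⟩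
  by_cases hc : c = 0
  · subst hc
    have ha : a ≠ 0 := by rintro rfl; simp at hdet
    have hd : d ≠ 0 := by rintro rfl; simp at hdet
    refine Or.inl ⟨a / d, b / d, div_ne_zero ha hd, ?_⟩
    simp only [map_zero, zero_mul, zero_add, map_div₀]
    field_simp
  · have hden : algebraMap K L c * α + algebraMap K L d ≠ 0 := fun h =>
      hc (eq_zero_of_linear_eq_zero hα h).1
    refine Or.inr (Set.mem_iUnion.mpr ⟨d / c, (b * c - a * d) / (c * c), a / c, ?_, ?_⟩)
    · exact div_ne_zero (fun h => hdet (by linear_combination -h)) (mul_ne_zero hc hc)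
    · rw [div_linear_eq_mul_inv_add _ _ _ _ _ (by simpa using hc) hden]
      simp only [map_div₀, map_sub, map_mul]

theorem projSet_eq_union {α : L} (hα : 1 < (minpoly K α).natDegree) :
    projSet K α = affineSet K α ∪ ⋃ ξ : K, affineSet K (α + algebraMap K L ξ)⁻¹ :=
  (projSet_subset hα).antisymm <| Set.union_subset (affineSet_subset_projSet α)
    (Set.iUnion_subset fun ξ => affineSet_inv_add_subset_projSet (add_algebraMap_ne_zero hα ξ))

theorem disjoint_affineSet_affineSet_inv_add {α : L} (hα : 2 < (minpoly K α).natDegree) (ξ : K) :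
    Disjoint (affineSet K α) (affineSet K (α + algebraMap K L ξ)⁻¹) := by
  rw [Set.disjoint_left]
  rintro _ ⟨a, b, ha, rfl⟩ ⟨a', b', -, heq⟩
  have hξ := add_algebraMap_ne_zero (hα.trans' one_lt_two) ξ
  have hrel : algebraMap K L a * α ^ 2 + algebraMap K L (b + a * ξ - b') * α +
      algebraMap K L (b * ξ - a' - b' * ξ) = 0 := by
    field_simp at heq
    simp only [map_add, map_sub, map_mul]
    linear_combination heq
  exact ha (eq_zero_of_quadratic_eq_zero hα hrel).1

theorem disjoint_affineSet_inv_add {α : L} (hα : 2 < (minpoly K α).natDegree) {ξ₁ ξ₂ : K}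
    (hξ : ξ₁ ≠ ξ₂) :
    Disjoint (affineSet K (α + algebraMap K L ξ₁)⁻¹) (affineSet K (α + algebraMap K L ξ₂)⁻¹) := by
  rw [Set.disjoint_left]
  rintro _ ⟨a, b, ha, rfl⟩ ⟨a', b', -, heq⟩
  have hξ₁ := add_algebraMap_ne_zero (hα.trans' one_lt_two) ξ₁
  have hξ₂ := add_algebraMap_ne_zero (hα.trans' one_lt_two) ξ₂
  have hrel : algebraMap K L (b - b') * α ^ 2 +
      algebraMap K L (a - a' + (b - b') * (ξ₁ + ξ₂)) * α +
      algebraMap K L (a * ξ₂ - a' * ξ₁ + (b - b') * (ξ₁ * ξ₂)) = 0 := by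
    field_simp at heq
    simp only [map_add, map_sub, map_mul]
    linear_combination heq
  obtain ⟨e₂, e₁, e₀⟩ := eq_zero_of_quadratic_eq_zero hα hrel
  have h : a * (ξ₂ - ξ₁) = 0 := by linear_combination e₀ - ξ₁ * e₁ + ξ₁ ^ 2 * e₂
  exact (mul_ne_zero ha (sub_ne_zero.mpr hξ.symm)) h

end

theorem ncard_setOf_eq_or_exists_eq {E ι : Type*} [Fintype ι] {s₀ : Set E} {s : ι → Set E}
    (hs : ∀ i, (s i).Nonempty) (hd₀ : ∀ i, Disjoint s₀ (s i))
    (hd : Pairwise (Function.onFun Disjoint s)) :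
    {A : Set E | A = s₀ ∨ ∃ i, A = s i}.ncard = Fintype.card ι + 1 := by
  have hset : {A : Set E | A = s₀ ∨ ∃ i, A = s i} = insert s₀ (Set.range s) := by
    ext A
    simp [eq_comm]
  have hnotMem : s₀ ∉ Set.range s := by
    rintro ⟨i, hi⟩
    exact (hs i).ne_empty ((hd₀ i).eq_bot_of_ge (hi.symm ▸ le_rfl))
  have hinj : Function.Injective s := fun i j hij => by
    by_contra hne
    exact (hs i).ne_empty ((hd hne).eq_bot_of_le (hij ▸ le_rfl))
  rw [hset, Set.ncard_insert_of_notMem hnotMem (Set.finite_range s),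
    Set.ncard_range_of_injective hinj, Nat.card_eq_fintype_card]

theorem projSet_partition_into_affineSets_general
    (p t n r : ℕ) (hr : 3 ≤ r)
    (K L : Type*) [Field K] [Field L] [Algebra K L] [Fintype K]
    (hK : Fintype.card K = (p ^ t) ^ n)
    (α : L) (hα : (minpoly K α).natDegree = r) :
    (projSet K α = affineSet K α ∪ ⋃ ξ : K, affineSet K (α + algebraMap K L ξ)⁻¹) ∧
    (∀ ξ : K, Disjoint (affineSet K α) (affineSet K (α + algebraMap K L ξ)⁻¹)) ∧
    (∀ ξ₁ ξ₂ : K, ξ₁ ≠ ξ₂ →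
        Disjoint (affineSet K (α + algebraMap K L ξ₁)⁻¹)
          (affineSet K (α + algebraMap K L ξ₂)⁻¹)) ∧
    {A : Set L | A = affineSet K α ∨
        ∃ ξ : K, A = affineSet K (α + algebraMap K L ξ)⁻¹}.ncard = (p ^ t) ^ n + 1 := by
  have hα₂ : 2 < (minpoly K α).natDegree := by omega
  have hα₁ : 1 < (minpoly K α).natDegree := by omega
  refine ⟨projSet_eq_union hα₁, disjoint_affineSet_affineSet_inv_add hα₂,
    fun _ _ => disjoint_affineSet_inv_add hα₂, ?_⟩
  rw [← hK]
  exact ncard_setOf_eq_or_exists_eq (fun _ => ⟨_, mem_affineSet_self _⟩)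
    (disjoint_affineSet_affineSet_inv_add hα₂) (fun _ _ => disjoint_affineSet_inv_add hα₂)

/-- Let `r ≥ 3` and `α ∈ S(n, r)`.  Then the projective linear set `O(α)`
is the union of the `q^n + 1` affine sets `A(α)` and `A(1/(α + ξ))` for `ξ` ranging over
`F_{q^n}`, these affine sets are pairwise disjoint, and there are exactly `q^n + 1` of them. -/
theorem projSet_partition_into_affineSets
    (p t n r : ℕ) (hp : p.Prime) (ht : 0 < t) (hn : 0 < n) (hr : 3 ≤ r)
    (K L : Type*) [Field K] [Field L] [Algebra K L] [Fintype K] [Fintype L]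
    (hK : Fintype.card K = (p ^ t) ^ n) (hL : Fintype.card L = (p ^ t) ^ (n * r))
    (α : L) (hα : (minpoly K α).natDegree = r) :
    (projSet K α = affineSet K α ∪ ⋃ ξ : K, affineSet K (α + algebraMap K L ξ)⁻¹) ∧
    (∀ ξ : K, Disjoint (affineSet K α) (affineSet K (α + algebraMap K L ξ)⁻¹)) ∧
    (∀ ξ₁ ξ₂ : K, ξ₁ ≠ ξ₂ →
        Disjoint (affineSet K (α + algebraMap K L ξ₁)⁻¹)
          (affineSet K (α + algebraMap K L ξ₂)⁻¹)) ∧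
    {A : Set L | A = affineSet K α ∨
        ∃ ξ : K, A = affineSet K (α + algebraMap K L ξ)⁻¹}.ncard = (p ^ t) ^ n + 1 :=
  projSet_partition_into_affineSets_general p t n r hr K L hK α hα
end

section
/- Let n be a prime number with n > 2, n ≠ p, such that n does not divide q^n − 1 but n divides q^n + 1. Let A = [[a, b], [c, d]] ∈ GL(2, q^n) be a matrix of order n whose minimal polynomial is an irreducible quadratic over F_{q^n}. Then every root (in an algebraic closure of F_{q^n}) of the polynomial F_n(x) = c·x^{q^n + 1} + d·x^{q^n} − a·x − b has degree exactly n over F_{q^n}; equivalently, F_n(x) factors over F_{q^n} into distinct monic irreducible polynomials all of degree n. -/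
open Polynomial Matrix IntermediateField

/-!
A root `β` of `F_n` satisfies `β ^ Q = (a β + b) / (c β + d)` with `Q = q ^ n = #K`: the matrix
`A` sends the line through `(β, 1)` to the line through `(β ^ Q, 1)`. As the entries of `A` are
fixed by the Frobenius `x ↦ x ^ Q`, iterating gives `A ^ k (β, 1) ∥ (β ^ Q ^ k, 1)`, so `A ^ n = 1`
forces `β ^ Q ^ n = β` and the degree of `β` divides the prime `n`. Degree one would make
`(β, 1)` an eigenvector of `A` over `K`, which the irreducible quadratic minimal polynomial forbids.
-/

namespace Matrix

variable {R : Type*} [CommRing R]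

theorem mulVec_vecCons_one_eq_smul (M : Matrix (Fin 2) (Fin 2) R) {x y : R}
    (h : M 1 0 * x * y + M 1 1 * y - M 0 0 * x - M 0 1 = 0) :
    M *ᵥ ![x, 1] = (M 1 0 * x + M 1 1) • ![y, 1] := by
  ext i
  fin_cases i
  · simp only [mulVec, dotProduct, Fin.zero_eta, Fin.isValue, Fin.sum_univ_two, cons_val_zero,
      cons_val_one, cons_val_fin_one, mul_one, Pi.smul_apply, smul_eq_mul]
    linear_combination -h
  · simp [mulVec, dotProduct]

variable {M : Matrix (Fin 2) (Fin 2) R} {σ : R →+* R}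

theorem mulVec_vecCons_one_eq_smul_ringHom (hσ : M.map σ = M) {x μ : R}
    (hx : M *ᵥ ![x, 1] = μ • ![σ x, 1]) :
    M *ᵥ ![σ x, 1] = σ μ • ![σ (σ x), 1] := by
  have hmap : ∀ y : R, ⇑σ ∘ ![y, 1] = ![σ y, 1] := fun y ↦ by
    ext i; fin_cases i <;> simp
  ext i
  have := congrArg σ (congrFun hx i)
  rw [RingHom.map_mulVec, hσ, hmap] at this
  rw [this]
  fin_cases i <;> simp

theorem iterate_eq_self_of_mulVec_eq_smul (hσ : M.map σ = M) {n : ℕ} (hn : M ^ n = 1) {x μ : R}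
    (hx : M *ᵥ ![x, 1] = μ • ![σ x, 1]) : σ^[n] x = x := by
  have hstep : ∀ k, M *ᵥ ![σ^[k] x, 1] = σ^[k] μ • ![σ^[k + 1] x, 1] := by
    intro k
    induction k with
    | zero => simpa using hx
    | succ k ih =>
      rw [Function.iterate_succ_apply'] at ih
      simpa only [Function.iterate_succ_apply'] using mulVec_vecCons_one_eq_smul_ringHom hσ ih
  have hpow : ∀ k, ∃ c : R, (M ^ k) *ᵥ ![x, 1] = c • ![σ^[k] x, 1] := by
    intro k
    induction k with
    | zero => exact ⟨1, by simp⟩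
    | succ k ih =>
      obtain ⟨c, hc⟩ := ih
      exact ⟨c * σ^[k] μ, by
        rw [pow_succ', ← mulVec_mulVec, hc, mulVec_smul, hstep, smul_smul]⟩
  obtain ⟨c, hc⟩ := hpow n
  rw [hn, one_mulVec] at hc
  have hc1 : c = 1 := by simpa using (congrFun hc 1).symm
  simpa [hc1] using (congrFun hc 0).symm

theorem isRoot_minpoly_of_mulVec_eq_smul {K ι : Type*} [Field K] [Fintype ι] [DecidableEq ι]
    {M : Matrix ι ι K} {v : ι → K} (hv : v ≠ 0) {μ : K} (h : M *ᵥ v = μ • v) :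
    (minpoly K M).IsRoot μ := by
  rw [← minpoly_toLin', ← Module.End.hasEigenvalue_iff_isRoot]
  exact Module.End.hasEigenvalue_of_hasEigenvector ⟨Module.End.mem_eigenspace_iff.2 h, hv⟩

end Matrix

/-- `F_n` of the statement is `mobiusPoly A (q ^ n)`. -/
noncomputable def mobiusPoly {R : Type*} [CommRing R] (M : Matrix (Fin 2) (Fin 2) R) (q : ℕ) :
    R[X] :=
  C (M 1 0) * X ^ (q + 1) + C (M 1 1) * X ^ q - C (M 0 0) * X - C (M 0 1)

theorem mulVec_map_eq_smul_of_aeval_mobiusPoly {R S : Type*} [CommRing R] [CommRing S]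
    [Algebra R S] (M : Matrix (Fin 2) (Fin 2) R) (q : ℕ) {x : S}
    (h : aeval x (mobiusPoly M q) = 0) :
    M.map (algebraMap R S) *ᵥ ![x, 1] =
      (algebraMap R S (M 1 0) * x + algebraMap R S (M 1 1)) • ![x ^ q, 1] := by
  apply mulVec_vecCons_one_eq_smul
  simp only [mobiusPoly, map_sub, map_add, map_mul, aeval_C, aeval_X_pow, aeval_X] at h
  simp only [map_apply]
  linear_combination h

section FiniteField

variable {K : Type*} [Field K] [Fintype K] {M : Matrix (Fin 2) (Fin 2) K}

theorem pow_card_pow_eq_self_of_aeval_mobiusPoly {L : Type*} [CommRing L] [Algebra K L] {n : ℕ}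
    (hM : M ^ n = 1) {x : L} (h : aeval x (mobiusPoly M (Fintype.card K)) = 0) :
    x ^ Fintype.card K ^ n = x := by
  let σ : L →+* L := FiniteField.frobeniusAlgHom K L
  have hσ : (M.map (algebraMap K L)).map σ = M.map (algebraMap K L) := by
    rw [Matrix.map_map]
    congr 1
    funext c
    exact (FiniteField.frobeniusAlgHom K L).commutes c
  have hn : M.map (algebraMap K L) ^ n = 1 := by
    rw [← RingHom.mapMatrix_apply, ← map_pow, hM, map_one]
  have := iterate_eq_self_of_mulVec_eq_smul hσ hn
    (mulVec_map_eq_smul_of_aeval_mobiusPoly M (Fintype.card K) h)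
  rwa [show ⇑σ = (· ^ Fintype.card K) from rfl, pow_iterate] at this

theorem natDegree_minpoly_dvd_of_pow_card_pow_eq_self {L : Type*} [Field L] [Algebra K L] {x : L}
    (hx : IsIntegral K x) {n : ℕ} (h : x ^ Fintype.card K ^ n = x) :
    (minpoly K x).natDegree ∣ n := by
  have : FiniteDimensional K K⟮x⟯ := adjoin.finiteDimensional hx
  have : Finite K⟮x⟯ := Module.finite_of_finite K
  rw [← adjoin.finrank hx, ← FiniteField.orderOf_frobeniusAlgHom]
  refine orderOf_dvd_of_pow_eq_one (adjoin_algHom_ext K fun y hy ↦ ?_)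
  rw [Set.mem_singleton_iff] at hy
  subst hy
  apply Subtype.ext
  simp [FiniteField.coe_frobeniusAlgHom, pow_iterate, h]

theorem natDegree_minpoly_ne_one_of_aeval_mobiusPoly {L : Type*} [Field L] [Algebra K L]
    (hM : ∀ μ, ¬ (minpoly K M).IsRoot μ) {x : L}
    (h : aeval x (mobiusPoly M (Fintype.card K)) = 0) : (minpoly K x).natDegree ≠ 1 := by
  intro hx
  obtain ⟨x₀, rfl⟩ := minpoly.natDegree_eq_one_iff.1 hx
  rw [aeval_algebraMap_apply, map_eq_zero_iff _ (FaithfulSMul.algebraMap_injective K L)] at h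
  have heig := mulVec_map_eq_smul_of_aeval_mobiusPoly M _ h
  rw [Algebra.algebraMap_self, RingHom.coe_id, map_id, id, id, FiniteField.pow_card] at heig
  exact hM _ (isRoot_minpoly_of_mulVec_eq_smul (by simp) heig)

end FiniteField

theorem roots_of_Fn_have_degree_n_general
    (p t n : ℕ) (hn : n.Prime)
    (K : Type*) [Field K] [Fintype K] (hK : Fintype.card K = (p ^ t) ^ n)
    (A : GL (Fin 2) K) (hord : orderOf A = n)
    (hirr : Irreducible (minpoly K (A : Matrix (Fin 2) (Fin 2) K)))
    (hdeg : (minpoly K (A : Matrix (Fin 2) (Fin 2) K)).natDegree = 2)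
    (β : AlgebraicClosure K)
    (hβ : Polynomial.aeval β
        (C ((A : Matrix (Fin 2) (Fin 2) K) 1 0) * X ^ ((p ^ t) ^ n + 1) +
          C ((A : Matrix (Fin 2) (Fin 2) K) 1 1) * X ^ ((p ^ t) ^ n) -
          C ((A : Matrix (Fin 2) (Fin 2) K) 0 0) * X -
          C ((A : Matrix (Fin 2) (Fin 2) K) 0 1)) = 0) :
    (minpoly K β).natDegree = n := by
  have hβ' : aeval β (mobiusPoly (A : Matrix (Fin 2) (Fin 2) K) (Fintype.card K)) = 0 := by
    rwa [hK]
  have hAn : (A : Matrix (Fin 2) (Fin 2) K) ^ n = 1 := by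
    rw [← Units.val_pow_eq_pow_val, ← hord, pow_orderOf_eq_one, Units.val_one]
  have hdvd : (minpoly K β).natDegree ∣ n :=
    natDegree_minpoly_dvd_of_pow_card_pow_eq_self (Algebra.IsIntegral.isIntegral β)
      (pow_card_pow_eq_self_of_aeval_mobiusPoly hAn hβ')
  have hne : (minpoly K β).natDegree ≠ 1 :=
    natDegree_minpoly_ne_one_of_aeval_mobiusPoly
      (fun _ ↦ hirr.not_isRoot_of_natDegree_ne_one (by omega)) hβ'
  exact (hn.eq_one_or_self_of_dvd _ hdvd).resolve_left hne

/-- Let `n` be a prime with `n > 2`, `n ≠ p`, such that `n ∤ q^n - 1` but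
`n ∣ q^n + 1` (with `q = p ^ t`).  Let `A = !![a, b; c, d] ∈ GL(2, q^n)` be a matrix of
order `n` whose minimal polynomial is an irreducible quadratic over `F_{q^n}`.  Then every
root (in an algebraic closure of `F_{q^n}`) of the polynomial
`F_n(x) = c x^{q^n + 1} + d x^{q^n} - a x - b` has degree exactly `n` over `F_{q^n}`. -/
theorem roots_of_Fn_have_degree_n
    (p t n : ℕ) (hp : p.Prime) (ht : 0 < t) (hn : n.Prime) (hn2 : 2 < n) (hnp : n ≠ p)
    (hndvd : ¬ n ∣ (p ^ t) ^ n - 1) (hdvd : n ∣ (p ^ t) ^ n + 1)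
    (K : Type*) [Field K] [Fintype K] (hK : Fintype.card K = (p ^ t) ^ n)
    (A : GL (Fin 2) K) (hord : orderOf A = n)
    (hirr : Irreducible (minpoly K (A : Matrix (Fin 2) (Fin 2) K)))
    (hdeg : (minpoly K (A : Matrix (Fin 2) (Fin 2) K)).natDegree = 2)
    (β : AlgebraicClosure K)
    (hβ : Polynomial.aeval β
        (C ((A : Matrix (Fin 2) (Fin 2) K) 1 0) * X ^ ((p ^ t) ^ n + 1) +
          C ((A : Matrix (Fin 2) (Fin 2) K) 1 1) * X ^ ((p ^ t) ^ n) -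
          C ((A : Matrix (Fin 2) (Fin 2) K) 0 0) * X -
          C ((A : Matrix (Fin 2) (Fin 2) K) 0 1)) = 0) :
    (minpoly K β).natDegree = n :=
  roots_of_Fn_have_degree_n_general p t n hn K hK A hord hirr hdeg β hβ
end
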